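/- Let V = (ZMod 2)^n and let A₁, A₂, A₃ ⊆ V with |A_i| = α_i·2^n for i = 1, 2, 3. If 0 < ε < 1/2 and A₁ and A₂ are ε-uniform in V, then the number of triples (a₁, a₂, a₃) ∈ A₁ × A₂ × A₃ with a₁ + a₂ + a₃ = 0 is at least (α₁·α₂·α₃ − ε)·2^(2n). -/

import Mathlib

/-- `A` is `ε`-uniform in `V = (ZMod 2)^n`: for every codimension-1 subspace `H` of `V`,
`| |A ∩ H| - |A \ H| | ≤ ε·2^n`. -/
def IsUniform {n : ℕ} (ε : ℝ) (A : Set (Fin n → ZMod 2)) : Prop :=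
  ∀ H : Submodule (ZMod 2) (Fin n → ZMod 2),
    Module.finrank (ZMod 2) H + 1 = n →
    |((A ∩ ↑H).ncard : ℝ) - ((A \ ↑H).ncard : ℝ)| ≤ ε * 2 ^ n

/-!
Let `T` be the number of triples. Orthogonality of the Walsh characters
`walsh r x = (-1) ^ (r ⬝ᵥ x)` gives `2^n T = ∑_r Â₁(r) Â₂(r) Â₃(r)` with
`Â(r) = ∑_{a ∈ A} walsh r a`. The term `r = 0` is `|A₁||A₂||A₃|`. For `r ≠ 0`,
`Â₁(r) = |A₁ ∩ H| - |A₁ \ H|` for the hyperplane `H = r^⊥`, so `|Â₁(r)| ≤ ε 2^n`, while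
`∑_r |Â₂(r) Â₃(r)| ≤ 2^{2n}` by AM-GM and Parseval.
-/

open Finset

lemma pi_zmod_two_add_eq_zero_iff {ι : Type*} {a b : ι → ZMod 2} : a + b = 0 ↔ a = b := by
  simp [funext_iff, CharTwo.add_eq_zero]

section Walsh

variable {ι : Type*} [Fintype ι]

def walsh (r : ι → ZMod 2) : AddChar (ι → ZMod 2) ℝ :=
  (AddChar.zmodChar 2 (by norm_num : (-1 : ℝ) ^ 2 = 1)).compAddMonoidHom
    (AddMonoidHom.mk' (r ⬝ᵥ ·) (dotProduct_add r))

lemma walsh_apply (r x : ι → ZMod 2) : walsh r x = (-1) ^ (r ⬝ᵥ x).val := rfl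

lemma walsh_apply_eq_ite (r x : ι → ZMod 2) : walsh r x = if r ⬝ᵥ x = 0 then 1 else -1 := by
  rw [walsh_apply]
  obtain h | h := (by decide : ∀ c : ZMod 2, c = 0 ∨ c = 1) (r ⬝ᵥ x)
  · simp [h]
  · rw [h, if_neg one_ne_zero, ZMod.val_one, pow_one]

lemma walsh_comm (r x : ι → ZMod 2) : walsh r x = walsh x r := by
  rw [walsh_apply, walsh_apply, dotProduct_comm]

lemma walsh_eq_zero_iff {r : ι → ZMod 2} : walsh r = 0 ↔ r = 0 := by
  classical
  refine ⟨fun h => ?_, fun h => by ext x; simp [walsh_apply, h]⟩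
  by_contra! hr
  obtain ⟨i, hi⟩ := Function.ne_iff.mp hr
  have : walsh r (Pi.single i 1) = -1 := by
    rw [walsh_apply_eq_ite, dotProduct_single, mul_one, if_neg (by simpa using hi)]
  rw [h, AddChar.zero_apply] at this
  norm_num at this

def walshCoeff (s : Finset (ι → ZMod 2)) (r : ι → ZMod 2) : ℝ := ∑ a ∈ s, walsh r a

lemma walshCoeff_zero (s : Finset (ι → ZMod 2)) : walshCoeff s 0 = #s := by
  simp [walshCoeff, walsh_apply]

lemma walshCoeff_eq_card_sub_card (s : Finset (ι → ZMod 2)) (r : ι → ZMod 2) :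
    walshCoeff s r = #{a ∈ s | r ⬝ᵥ a = 0} - #{a ∈ s | r ⬝ᵥ a ≠ 0} := by
  simp only [walshCoeff, walsh_apply_eq_ite, sum_ite, sum_const, nsmul_eq_mul]
  ring

variable [DecidableEq ι]

lemma sum_walsh_apply (x : ι → ZMod 2) :
    ∑ r, walsh r x = if x = 0 then 2 ^ Fintype.card ι else 0 := by
  simp [walsh_comm _ x, AddChar.sum_eq_ite, walsh_eq_zero_iff]

lemma sum_walshCoeff_sq (s : Finset (ι → ZMod 2)) :
    ∑ r, walshCoeff s r ^ 2 = 2 ^ Fintype.card ι * #s := by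
  calc ∑ r, walshCoeff s r ^ 2 = ∑ a ∈ s, ∑ b ∈ s, ∑ r, walsh r (a + b) := by
        simp only [walshCoeff, sq, sum_mul_sum, AddChar.map_add_eq_mul]
        rw [sum_comm]; exact sum_congr rfl fun _ _ => sum_comm
    _ = ∑ a ∈ s, (2 : ℝ) ^ Fintype.card ι := by
        refine sum_congr rfl fun a ha => ?_
        simp_rw [sum_walsh_apply, pi_zmod_two_add_eq_zero_iff]
        rw [sum_ite_eq s a]; simp [ha]
    _ = 2 ^ Fintype.card ι * #s := by rw [sum_const, nsmul_eq_mul, mul_comm]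

lemma sum_abs_walshCoeff_mul_le (s t : Finset (ι → ZMod 2)) :
    ∑ r, |walshCoeff s r * walshCoeff t r| ≤ 2 ^ Fintype.card ι * 2 ^ Fintype.card ι := by
  have hcard : ∀ u : Finset (ι → ZMod 2), (#u : ℝ) ≤ 2 ^ Fintype.card ι := fun u => by
    exact_mod_cast (card_le_univ u).trans_eq (by simp)
  have amgm : ∀ r,
      2 * |walshCoeff s r * walshCoeff t r| ≤ walshCoeff s r ^ 2 + walshCoeff t r ^ 2 := fun r => by
    rw [abs_mul, ← mul_assoc, ← sq_abs (walshCoeff s r), ← sq_abs (walshCoeff t r)]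
    exact two_mul_le_add_sq _ _
  have hsum := sum_le_sum fun r (_ : r ∈ univ) => amgm r
  rw [← mul_sum, sum_add_distrib, sum_walshCoeff_sq, sum_walshCoeff_sq] at hsum
  have hpos : (0 : ℝ) ≤ 2 ^ Fintype.card ι := by positivity
  linarith [mul_le_mul_of_nonneg_left (hcard s) hpos, mul_le_mul_of_nonneg_left (hcard t) hpos]

def sumZeroTriples (s t u : Finset (ι → ZMod 2)) :
    Finset ((ι → ZMod 2) × (ι → ZMod 2) × (ι → ZMod 2)) :=
  {p ∈ s ×ˢ t ×ˢ u | p.1 + p.2.1 + p.2.2 = 0}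

lemma card_sumZeroTriples_eq_sum_walshCoeff (s t u : Finset (ι → ZMod 2)) :
    2 ^ Fintype.card ι * (#(sumZeroTriples s t u) : ℝ) =
      ∑ r, walshCoeff s r * walshCoeff t r * walshCoeff u r := by
  calc 2 ^ Fintype.card ι * (#(sumZeroTriples s t u) : ℝ)
      = ∑ p ∈ s ×ˢ t ×ˢ u, ∑ r, walsh r (p.1 + p.2.1 + p.2.2) := by
        simp_rw [sum_walsh_apply, ← sum_filter, sum_const, nsmul_eq_mul, mul_comm]
        rfl
    _ = ∑ r, walshCoeff s r * walshCoeff t r * walshCoeff u r := by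
        rw [sum_comm]
        refine sum_congr rfl fun r _ => ?_
        simp only [walshCoeff, AddChar.map_add_eq_mul, sum_product]
        rw [mul_assoc, sum_mul, sum_mul_sum]
        simp only [mul_sum, mul_assoc]

lemma card_mul_card_mul_card_sub_le_card_sumZeroTriples {s t u : Finset (ι → ZMod 2)} {δ : ℝ}
    (hδ : 0 ≤ δ) (hs : ∀ r ≠ 0, |walshCoeff s r| ≤ δ) :
    #s * #t * #u - δ * (2 ^ Fintype.card ι * 2 ^ Fintype.card ι) ≤
      2 ^ Fintype.card ι * (#(sumZeroTriples s t u) : ℝ) := by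
  rw [card_sumZeroTriples_eq_sum_walshCoeff, ← add_sum_erase _ _ (mem_univ 0), walshCoeff_zero,
    walshCoeff_zero, walshCoeff_zero]
  have hE : |∑ r ∈ univ.erase 0, walshCoeff s r * walshCoeff t r * walshCoeff u r| ≤
      δ * (2 ^ Fintype.card ι * 2 ^ Fintype.card ι) :=
    calc _ ≤ ∑ r ∈ univ.erase 0, |walshCoeff s r * walshCoeff t r * walshCoeff u r| :=
          abs_sum_le_sum_abs _ _
      _ ≤ ∑ r ∈ univ.erase 0, δ * |walshCoeff t r * walshCoeff u r| :=
          sum_le_sum fun r hr => by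
            rw [mul_assoc, abs_mul]
            exact mul_le_mul_of_nonneg_right (hs r (ne_of_mem_erase hr)) (abs_nonneg _)
      _ ≤ ∑ r, δ * |walshCoeff t r * walshCoeff u r| :=
          sum_le_sum_of_subset_of_nonneg (erase_subset _ _) fun _ _ _ => by positivity
      _ ≤ δ * (2 ^ Fintype.card ι * 2 ^ Fintype.card ι) := by
          rw [← mul_sum]; exact mul_le_mul_of_nonneg_left (sum_abs_walshCoeff_mul_le t u) hδ
  linarith [neg_abs_le (∑ r ∈ univ.erase 0, walshCoeff s r * walshCoeff t r * walshCoeff u r)]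

end Walsh

lemma IsUniform.abs_walshCoeff_le {n : ℕ} {ε : ℝ} {s : Finset (Fin n → ZMod 2)}
    (hs : IsUniform ε (s : Set (Fin n → ZMod 2))) {r : Fin n → ZMod 2} (hr : r ≠ 0) :
    |walshCoeff s r| ≤ ε * 2 ^ n := by
  set H := LinearMap.ker (dotProductEquiv (ZMod 2) (Fin n) r)
  have hH : Module.finrank (ZMod 2) H + 1 = n :=
    (Module.Dual.finrank_ker_add_one_of_ne_zero (by simpa using hr)).trans
      (Module.finrank_fin_fun _)
  have hinter : (s : Set (Fin n → ZMod 2)) ∩ H = ↑({a ∈ s | r ⬝ᵥ a = 0}) := by ext; simp [H]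
  have hdiff : (s : Set (Fin n → ZMod 2)) \ H = ↑({a ∈ s | r ⬝ᵥ a ≠ 0}) := by ext; simp [H]
  have := hs H hH
  rwa [hinter, hdiff, Set.ncard_coe_finset, Set.ncard_coe_finset, ← walshCoeff_eq_card_sub_card]
    at this

theorem stmt_15_general (n : ℕ) (A₁ A₂ A₃ : Set (Fin n → ZMod 2)) (α₁ α₂ α₃ ε : ℝ)
    (h₁ : (A₁.ncard : ℝ) = α₁ * 2 ^ n)
    (h₂ : (A₂.ncard : ℝ) = α₂ * 2 ^ n)
    (h₃ : (A₃.ncard : ℝ) = α₃ * 2 ^ n)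
    (hε : 0 < ε)
    (hu₁ : IsUniform ε A₁) :
    (α₁ * α₂ * α₃ - ε) * 2 ^ (2 * n) ≤
      (({p : (Fin n → ZMod 2) × (Fin n → ZMod 2) × (Fin n → ZMod 2) |
          p.1 ∈ A₁ ∧ p.2.1 ∈ A₂ ∧ p.2.2 ∈ A₃ ∧ p.1 + p.2.1 + p.2.2 = 0}).ncard : ℝ) := by
  classical
  have hcount : {p : (Fin n → ZMod 2) × (Fin n → ZMod 2) × (Fin n → ZMod 2) |
      p.1 ∈ A₁ ∧ p.2.1 ∈ A₂ ∧ p.2.2 ∈ A₃ ∧ p.1 + p.2.1 + p.2.2 = 0}.ncard =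
      #(sumZeroTriples A₁.toFinset A₂.toFinset A₃.toFinset) := by
    rw [← Set.ncard_coe_finset]
    congr 1
    ext p
    simp [sumZeroTriples, and_assoc]
  have hu : IsUniform ε (A₁.toFinset : Set (Fin n → ZMod 2)) := by rwa [Set.coe_toFinset]
  have key := card_mul_card_mul_card_sub_le_card_sumZeroTriples (t := A₂.toFinset)
    (u := A₃.toFinset) (by positivity : 0 ≤ ε * 2 ^ n) fun _ => hu.abs_walshCoeff_le
  rw [Fintype.card_fin, ← Set.ncard_eq_toFinset_card', ← Set.ncard_eq_toFinset_card',
    ← Set.ncard_eq_toFinset_card', h₁, h₂, h₃] at key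
  rw [hcount, pow_mul']
  refine le_of_mul_le_mul_left ?_ (by positivity : (0 : ℝ) < 2 ^ n)
  linarith

theorem stmt_15 (n : ℕ) (A₁ A₂ A₃ : Set (Fin n → ZMod 2)) (α₁ α₂ α₃ ε : ℝ)
    (h₁ : (A₁.ncard : ℝ) = α₁ * 2 ^ n)
    (h₂ : (A₂.ncard : ℝ) = α₂ * 2 ^ n)
    (h₃ : (A₃.ncard : ℝ) = α₃ * 2 ^ n)
    (hε : 0 < ε) (hε2 : ε < 1 / 2)
    (hu₁ : IsUniform ε A₁) (hu₂ : IsUniform ε A₂) :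
    (α₁ * α₂ * α₃ - ε) * 2 ^ (2 * n) ≤
      (({p : (Fin n → ZMod 2) × (Fin n → ZMod 2) × (Fin n → ZMod 2) |
          p.1 ∈ A₁ ∧ p.2.1 ∈ A₂ ∧ p.2.2 ∈ A₃ ∧ p.1 + p.2.1 + p.2.2 = 0}).ncard : ℝ) :=
  stmt_15_general n A₁ A₂ A₃ α₁ α₂ α₃ ε h₁ h₂ h₃ hε hu₁
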